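/- arXiv:1207.6816 — 2 statements merged into one kernel-verified Lean document; each statement's English description precedes it below -/
import Mathlib

section
/- If two first-order terms s and t are unifiable and both s and t contain only function symbols from a designated set F of 'program function symbols', then any most general unifier of s and t binds variables only to terms containing function symbols from F. -/
set_option autoImplicit false

namespace Flounder

/-- First-order terms over function symbols `F`, with natural-number variables. -/
inductive Trm (F : Type) : Type
  | var : ℕ → Trm F
  | app : F → List (Trm F) → Trm F

/-- Substitutions map variables to terms. -/
abbrev Subst (F : Type) := ℕ → Trm F

/-- Applying a substitution to a term. -/
def Trm.subst {F : Type} (θ : Subst F) : Trm F → Trm F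
  | .var v => θ v
  | .app f ts => .app f (ts.attach.map (fun t => Trm.subst θ t.1))
  decreasing_by
    have := List.sizeOf_lt_of_mem t.2
    simp only [Trm.app.sizeOf_spec] at *
    omega

/-- Composition of substitutions. -/
def Subst.comp {F : Type} (θ σ : Subst F) : Subst F := fun v => (θ v).subst σ

/-- The variable `v` occurs in the term. -/
inductive Trm.HasVar {F : Type} (v : ℕ) : Trm F → Prop
  | var : Trm.HasVar v (.var v)
  | app {f : F} {ts : List (Trm F)} {t : Trm F} :
      t ∈ ts → Trm.HasVar v t → Trm.HasVar v (.app f ts)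

/-- The function symbol `f` occurs in the term. -/
inductive Trm.HasFunc {F : Type} (f : F) : Trm F → Prop
  | head {ts : List (Trm F)} : Trm.HasFunc f (.app f ts)
  | arg {g : F} {ts : List (Trm F)} {t : Trm F} :
      t ∈ ts → Trm.HasFunc f t → Trm.HasFunc f (.app g ts)

def Trm.Ground {F : Type} (t : Trm F) : Prop := ∀ v, ¬ t.HasVar v

/-- All function symbols of the term belong to `Fp` (a "program term"). -/
def Trm.OnlyFuncs {F : Type} (Fp : Set F) (t : Trm F) : Prop := ∀ f, t.HasFunc f → f ∈ Fp

/-- The principal function symbol is extraneous (an "encoded variable"). -/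
def EVarT {F : Type} (Fp : Set F) : Trm F → Prop
  | .var _ => False
  | .app f _ => f ∉ Fp

/-- The term contains an extraneous function symbol (an "encoded non-ground term"). -/
def ENongroundT {F : Type} (Fp : Set F) (t : Trm F) : Prop := ∃ f, t.HasFunc f ∧ f ∉ Fp

/-- A renaming substitution: variables mapped injectively to variables. -/
def IsRenaming {F : Type} (ρ : Subst F) : Prop :=
  ∃ r : ℕ → ℕ, Function.Injective r ∧ ∀ v, ρ v = Trm.var (r v)

/-- Atoms: a predicate symbol applied to a list of terms. -/
structure Atom (P F : Type) where
  pred : P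
  args : List (Trm F)

def Atom.subst {P F : Type} (θ : Subst F) (A : Atom P F) : Atom P F :=
  ⟨A.pred, A.args.map (Trm.subst θ)⟩

def Atom.HasVar {P F : Type} (A : Atom P F) (v : ℕ) : Prop := ∃ t ∈ A.args, t.HasVar v
def Atom.Ground {P F : Type} (A : Atom P F) : Prop := ∀ v, ¬ A.HasVar v
def Atom.OnlyFuncs {P F : Type} (Fp : Set F) (A : Atom P F) : Prop :=
  ∀ t ∈ A.args, t.OnlyFuncs Fp

/-- `B` is an instance of `A`. -/
def Atom.Instance {P F : Type} (A B : Atom P F) : Prop := ∃ σ : Subst F, B = A.subst σ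
def Atom.Variant {P F : Type} (A B : Atom P F) : Prop := A.Instance B ∧ B.Instance A

def UnifiesA {P F : Type} (θ : Subst F) (A B : Atom P F) : Prop := A.subst θ = B.subst θ
/-- Most general unifier of two atoms: a unifier through which every unifier factors. -/
def IsMGUA {P F : Type} (θ : Subst F) (A B : Atom P F) : Prop :=
  UnifiesA θ A B ∧ ∀ η, UnifiesA η A B → ∃ σ, η = θ.comp σ

/-- Definite clauses. -/
structure Clause (P F : Type) where
  head : Atom P F
  body : List (Atom P F)

def Clause.subst {P F : Type} (θ : Subst F) (c : Clause P F) : Clause P F :=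
  ⟨c.head.subst θ, c.body.map (Atom.subst θ)⟩
def Clause.HasVar {P F : Type} (c : Clause P F) (v : ℕ) : Prop :=
  c.head.HasVar v ∨ ∃ B ∈ c.body, B.HasVar v
def Clause.Ground {P F : Type} (c : Clause P F) : Prop :=
  c.head.Ground ∧ ∀ B ∈ c.body, B.Ground
def Clause.OnlyFuncs {P F : Type} (Fp : Set F) (c : Clause P F) : Prop :=
  c.head.OnlyFuncs Fp ∧ ∀ B ∈ c.body, B.OnlyFuncs Fp

/-- Annotations record the list of (clause, body position) pairs by which an atom was
introduced; `none` marks the top-level goal ("clause 0"). -/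
abbrev Ann (P F : Type) := List (Option (Clause P F) × ℕ)

/-- Annotated goals. -/
abbrev AGoal (P F : Type) := List (Atom P F × Ann P F)

def initGoal {P F : Type} (G : List (Atom P F)) : AGoal P F :=
  (G.zipIdx.map Prod.swap).map fun p => (p.2, [(none, p.1 + 1)])

def AGoal.HasVar {P F : Type} (g : AGoal P F) (v : ℕ) : Prop := ∃ a ∈ g, a.1.HasVar v
def AGoal.inst {P F : Type} (θ : Subst F) (g : AGoal P F) : AGoal P F :=
  g.map fun a => (a.1.subst θ, a.2)

/-- The annotated body of a clause variant `c` (with original clause `c₀`), inserted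
in place of a selected atom with annotation `ann`. -/
def annBody {P F : Type} (c c₀ : Clause P F) (ann : Ann P F) : AGoal P F :=
  (c.body.zipIdx.map Prod.swap).map fun p => (p.2, (some c₀, p.1 + 1) :: ann)

/-- SLD(F) derivations of length `n` from goal `g0` with program `prog`, where only
atoms in the callable set `C` may be selected (SLD resolution: `C = Set.univ`).
`raw i` is the `i`-th goal with atoms as introduced (not yet instantiated), and
`sub i` is the composition of the mgus of the first `i` steps; the actual `i`-th
resolvent is `raw i` instantiated by `sub i`.  Clause variants are renamed apart. -/
structure Derivation (P F : Type) (prog : Set (Clause P F)) (C : Set (Atom P F))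
    (g0 : AGoal P F) (n : ℕ) where
  raw : ℕ → AGoal P F
  sub : ℕ → Subst F
  orig : ℕ → Clause P F
  cl : ℕ → Clause P F
  mgu : ℕ → Subst F
  selAtom : ℕ → Atom P F
  selAnn : ℕ → Ann P F
  hraw0 : raw 0 = g0
  hsub0 : sub 0 = fun v => Trm.var v
  horig : ∀ i < n, orig i ∈ prog
  hvariant : ∀ i < n, ∃ ρ, IsRenaming ρ ∧ cl i = (orig i).subst ρ
  hfresh : ∀ i < n, ∀ v, (cl i).HasVar v →
      (∀ j ≤ i, ¬ AGoal.HasVar (raw j) v) ∧ sub i v = Trm.var v ∧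
        ∀ u, ¬ Trm.HasVar v (sub i u)
  hstep : ∀ i < n, ∃ pre post, raw i = pre ++ ((selAtom i, selAnn i) :: post) ∧
      (selAtom i).subst (sub i) ∈ C ∧
      IsMGUA (mgu i) ((selAtom i).subst (sub i)) (cl i).head ∧
      raw (i + 1) = pre ++ annBody (cl i) (orig i) (selAnn i) ++ post
  hsubs : ∀ i < n, sub (i + 1) = (sub i).comp (mgu i)

namespace Derivation

variable {P F : Type} {prog : Set (Clause P F)} {C : Set (Atom P F)} {g0 : AGoal P F} {n : ℕ}

/-- The `i`-th resolvent. -/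
def resolvent (D : Derivation P F prog C g0 n) (i : ℕ) : AGoal P F :=
  AGoal.inst (D.sub i) (D.raw i)

/-- The atoms of the `i`-th resolvent. -/
def resAtoms (D : Derivation P F prog C g0 n) (i : ℕ) : List (Atom P F) :=
  (D.resolvent i).map Prod.fst

def rawAtoms (D : Derivation P F prog C g0 n) (i : ℕ) : List (Atom P F) :=
  (D.raw i).map Prod.fst

def Successful (D : Derivation P F prog C g0 n) : Prop := D.raw n = []

/-- Floundered: the last resolvent is nonempty and none of its atoms is callable. -/
def Floundered (D : Derivation P F prog C g0 n) : Prop :=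
  D.raw n ≠ [] ∧ ∀ a ∈ D.resolvent n, a.1 ∉ C

/-- The composed answer substitution of the derivation. -/
def answer (D : Derivation P F prog C g0 n) : Subst F := D.sub n

end Derivation

/-- Two derivations use the same clause selection: corresponding selected atoms
(equal annotations) are resolved with the same program clause. -/
def SameSelection {P F : Type} {prog prog' : Set (Clause P F)} {C C' : Set (Atom P F)}
    {g0 g0' : AGoal P F} {n n' : ℕ}
    (D : Derivation P F prog C g0 n) (D' : Derivation P F prog' C' g0' n') : Prop :=
  ∀ i < n, ∀ i' < n', D.selAnn i = D'.selAnn i' → D.orig i = D'.orig i'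

/-- The answer substitution is a renaming on the variables of goal `G`. -/
def RenamingOnGoal {P F : Type} (G : List (Atom P F)) (θ : Subst F) : Prop :=
  (∀ v, (∃ A ∈ G, A.HasVar v) → ∃ u, θ v = Trm.var u) ∧
  (∀ v w, (∃ A ∈ G, A.HasVar v) → (∃ A ∈ G, A.HasVar w) → v ≠ w → θ v ≠ θ w)

/-- Goal-level instance (one substitution applied throughout). -/
def GoalInst {P F : Type} (g h : List (Atom P F)) : Prop :=
  ∃ σ : Subst F, h = g.map (Atom.subst σ)

/-- `m` is a most general common instance of `g₁` and `g₂`. -/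
def MGIGoal {P F : Type} (g₁ g₂ m : List (Atom P F)) : Prop :=
  GoalInst g₁ m ∧ GoalInst g₂ m ∧
    ∀ m', GoalInst g₁ m' → GoalInst g₂ m' → GoalInst m m'

/-! ## Delay declarations -/

/-- Delay conditions over `n` argument positions, built from `var`, `nonground`,
conjunction and disjunction. -/
inductive DCond : ℕ → Type
  | var {n : ℕ} : Fin n → DCond n
  | nonground {n : ℕ} : Fin n → DCond n
  | conj {n : ℕ} : DCond n → DCond n → DCond n
  | disj {n : ℕ} : DCond n → DCond n → DCond n

/-- Concrete (procedural) truth of a delay condition. -/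
def DCond.holds {F : Type} {n : ℕ} (args : Fin n → Trm F) : DCond n → Prop
  | DCond.var i => ∃ v, args i = Trm.var v
  | DCond.nonground i => ¬ Trm.Ground (args i)
  | DCond.conj c d => DCond.holds args c ∧ DCond.holds args d
  | DCond.disj c d => DCond.holds args c ∨ DCond.holds args d

structure DelayDecl (P : Type) where
  pred : P
  arity : ℕ
  cond : DCond arity

/-- A program with delay declarations. -/
structure DProg (P F : Type) where
  prog : Set (Clause P F)
  delays : Set (DelayDecl P)

/-- An atom matches some delay declaration whose condition holds. -/
def Delayed {P F : Type} (dp : DProg P F) (A : Atom P F) : Prop :=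
  ∃ d ∈ dp.delays, d.pred = A.pred ∧ ∃ h : A.args.length = d.arity,
    DCond.holds (fun i => A.args.get (Fin.cast h.symm i)) d.cond

/-- The callable atom set induced by the delay declarations. -/
def Callable {P F : Type} (dp : DProg P F) : Set (Atom P F) := {A | ¬ Delayed dp A}

/-- A nonempty goal all of whose atoms are delayed. -/
def ImmFloundered {P F : Type} (dp : DProg P F) (G : List (Atom P F)) : Prop :=
  G ≠ [] ∧ ∀ A ∈ G, Delayed dp A

/-! ## The SF transformation -/

/-- Predicates of `SF(P)`: the original predicates plus `evar/1` and `enonground/1`. -/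
inductive SPred (P : Type) : Type
  | orig : P → SPred P
  | evar : SPred P
  | enonground : SPred P

def Atom.mapPred {P Q F : Type} (f : P → Q) (A : Atom P F) : Atom Q F := ⟨f A.pred, A.args⟩
def Clause.mapPred {P Q F : Type} (f : P → Q) (c : Clause P F) : Clause Q F :=
  ⟨c.head.mapPred f, c.body.map (Atom.mapPred f)⟩

/-- Disjunctive normal form of a delay condition: a list of conjunctions of
literals `(i, true)` (= var) and `(i, false)` (= nonground). -/
def DCond.dnf {n : ℕ} : DCond n → List (List (Fin n × Bool))
  | DCond.var i => [[(i, true)]]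
  | DCond.nonground i => [[(i, false)]]
  | DCond.conj c d => (DCond.dnf c).flatMap (fun a => (DCond.dnf d).map (fun b => a ++ b))
  | DCond.disj c d => DCond.dnf c ++ DCond.dnf d

/-- The delay clauses `A :- C'` added for the delay declarations (conditions
translated to `evar`/`enonground` calls, one clause per DNF disjunct). -/
def declClauses {P F : Type} (dp : DProg P F) : Set (Clause (SPred P) F) :=
  { c | ∃ d ∈ dp.delays, ∃ conj ∈ DCond.dnf d.cond,
      c = ⟨⟨SPred.orig d.pred, (List.range d.arity).map Trm.var⟩,
           conj.map (fun p =>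
             ⟨if p.2 then SPred.evar else SPred.enonground, [Trm.var (p.1 : ℕ)]⟩)⟩ }

/-- The infinite fact set defining `evar/1`. -/
def evarFacts (P : Type) {F : Type} (Fp : Set F) : Set (Clause (SPred P) F) :=
  { c | ∃ t : Trm F, t.Ground ∧ EVarT Fp t ∧ c = ⟨⟨SPred.evar, [t]⟩, []⟩ }

/-- The infinite fact set defining `enonground/1`. -/
def engFacts (P : Type) {F : Type} (Fp : Set F) : Set (Clause (SPred P) F) :=
  { c | ∃ t : Trm F, t.Ground ∧ ENongroundT Fp t ∧ c = ⟨⟨SPred.enonground, [t]⟩, []⟩ }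

/-- All delay clauses: those for the declarations plus the `evar`/`enonground` facts. -/
def delayClausesAll {P F : Type} (Fp : Set F) (dp : DProg P F) : Set (Clause (SPred P) F) :=
  declClauses dp ∪ evarFacts P Fp ∪ engFacts P Fp

/-- The transformed program `SF(P)`. -/
def SFprog {P F : Type} (Fp : Set F) (dp : DProg P F) : Set (Clause (SPred P) F) :=
  (Clause.mapPred SPred.orig '' dp.prog) ∪ delayClausesAll Fp dp

/-- The (ground) success set of a program: ground atoms with successful SLD
derivations. -/
def SS {P F : Type} (prog : Set (Clause P F)) : Set (Atom P F) :=
  { A | A.Ground ∧ ∃ n, ∃ D : Derivation P F prog Set.univ (initGoal [A]) n, D.Successful }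

/-- The non-ground flounder set: program atoms with floundered derivations whose
floundered computed answer substitution is a renaming (empty). -/
def NFS {P F : Type} (Fp : Set F) (prog : Set (Clause P F)) (C : Set (Atom P F)) :
    Set (Atom P F) :=
  { A | A.OnlyFuncs Fp ∧ ∃ n, ∃ D : Derivation P F prog C (initGoal [A]) n,
        D.Floundered ∧ RenamingOnGoal [A] (D.sub n) }

/-- `A` is a ground encoding of `B`: distinct variables of `B` are replaced by
distinct ground terms with extraneous principal function symbols. -/
def Encodes {P F : Type} (Fp : Set F) (B A : Atom P F) : Prop :=
  ∃ σ : Subst F, A = B.subst σ ∧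
    (∀ v, B.HasVar v → (σ v).Ground ∧ EVarT Fp (σ v)) ∧
    (∀ v w, B.HasVar v → B.HasVar w → v ≠ w → σ v ≠ σ w)

/-- The encoded flounder set. -/
def EFS {P F : Type} (Fp : Set F) (prog : Set (Clause P F)) (C : Set (Atom P F)) :
    Set (Atom P F) :=
  { A | ∃ B ∈ NFS Fp prog C, Encodes Fp B A }

/-- The computed answer binds each variable of `G` either to a variable or to a
ground term with extraneous principal function symbol, injectively. -/
def ExtrAnswer {P F : Type} (Fp : Set F) (G : List (Atom P F)) (θ : Subst F) : Prop :=
  (∀ v, (∃ A ∈ G, A.HasVar v) →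
      (∃ u, θ v = Trm.var u) ∨ ((θ v).Ground ∧ EVarT Fp (θ v))) ∧
  (∀ v w, (∃ A ∈ G, A.HasVar v) → (∃ A ∈ G, A.HasVar w) → v ≠ w → θ v ≠ θ w)

/-! ## Proof trees and the flagged immediate consequence operator -/

/-- `Proof prog A n`: the ground atom `A` has an SLD proof tree of height ≤ `n`. -/
inductive Proof {P F : Type} (prog : Set (Clause P F)) : Atom P F → ℕ → Prop
  | node {c : Clause P F} {γ : Subst F} {m : ℕ} :
      c ∈ prog → (Clause.subst γ c).Ground →
      (∀ B ∈ (Clause.subst γ c).body, Proof prog B m) →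
      Proof prog (Clause.subst γ c).head (m + 1)
  | succ {A : Atom P F} {m : ℕ} : Proof prog A m → Proof prog A (m + 1)

/-- `ProofD prog S A n`: proof tree of height ≤ `n` using at least one clause from `S`. -/
inductive ProofD {P F : Type} (prog S : Set (Clause P F)) : Atom P F → ℕ → Prop
  | here {c : Clause P F} {γ : Subst F} {m : ℕ} :
      c ∈ prog → c ∈ S → (Clause.subst γ c).Ground →
      (∀ B ∈ (Clause.subst γ c).body, Proof prog B m) →
      ProofD prog S (Clause.subst γ c).head (m + 1)
  | there {c : Clause P F} {γ : Subst F} {m : ℕ} {B : Atom P F} :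
      c ∈ prog → (Clause.subst γ c).Ground →
      (∀ B' ∈ (Clause.subst γ c).body, Proof prog B' m) →
      B ∈ (Clause.subst γ c).body → ProofD prog S B m →
      ProofD prog S (Clause.subst γ c).head (m + 1)
  | succ {A : Atom P F} {m : ℕ} : ProofD prog S A m → ProofD prog S A (m + 1)

/-- The standard immediate consequence operator. -/
def Tp {P F : Type} (prog : Set (Clause P F)) (I : Set (Atom P F)) : Set (Atom P F) :=
  { A | ∃ c ∈ prog, ∃ γ : Subst F, (Clause.subst γ c).Ground ∧
        (Clause.subst γ c).head = A ∧ ∀ B ∈ (Clause.subst γ c).body, B ∈ I }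

/-- f-interpretations: a set of ground atoms, some flagged. -/
structure FInterp (P F : Type) where
  atoms : Set (Atom P F)
  flagged : Set (Atom P F)

/-- The flagged immediate consequence operator `T^f_P`. -/
def Tf {P F : Type} (Fp : Set F) (dp : DProg P F) (I : FInterp (SPred P) F) :
    FInterp (SPred P) F where
  atoms := Tp (SFprog Fp dp) I.atoms
  flagged := { A | A ∈ Tp (SFprog Fp dp) I.atoms ∧
      (A.pred = SPred.evar ∨ A.pred = SPred.enonground ∨
       ∃ c ∈ SFprog Fp dp, ∃ γ : Subst F, (Clause.subst γ c).Ground ∧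
         (Clause.subst γ c).head = A ∧
         (∀ B ∈ (Clause.subst γ c).body, B ∈ I.atoms) ∧
         ∃ B ∈ (Clause.subst γ c).body, B ∈ I.flagged) }

/-- Iterates `T^f_P ↑ n`. -/
def TfIter {P F : Type} (Fp : Set F) (dp : DProg P F) : ℕ → FInterp (SPred P) F
  | 0 => ⟨∅, ∅⟩
  | m + 1 => Tf Fp dp (TfIter Fp dp m)

/-- `T^f_P ↑ ω`. -/
def TfOmega {P F : Type} (Fp : Set F) (dp : DProg P F) : FInterp (SPred P) F :=
  ⟨⋃ m, (TfIter Fp dp m).atoms, ⋃ m, (TfIter Fp dp m).flagged⟩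

/-! An mgu `θ` of two program terms factors every unifier, in particular the one obtained from
`θ` by pruning every subterm with an extraneous head symbol; as substitution never removes
function symbols, each `θ v` has only the symbols of its pruning, which are program symbols. -/

theorem Trm.induction_mem {F : Type} {motive : Trm F → Prop}
    (var : ∀ v, motive (.var v))
    (app : ∀ f ts, (∀ t ∈ ts, motive t) → motive (.app f ts)) (t : Trm F) : motive t := by
  induction t using Trm.subst.induct with
  | case1 v => exact var v
  | case2 f ts ih => exact app f ts fun t ht => ih ⟨t, ht⟩

@[simp] theorem Trm.subst_var {F : Type} (θ : Subst F) (v : ℕ) :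
    (Trm.var v).subst θ = θ v := by
  rw [Trm.subst]

theorem Trm.subst_app {F : Type} (θ : Subst F) (f : F) (ts : List (Trm F)) :
    (Trm.app f ts).subst θ = .app f (ts.map (Trm.subst θ)) := by
  rw [Trm.subst, List.attach_map_val]

theorem Trm.HasFunc.subst {F : Type} {t : Trm F} {f : F} (σ : Subst F) (h : t.HasFunc f) :
    (t.subst σ).HasFunc f := by
  induction h with
  | head => rw [Trm.subst_app]; exact .head
  | arg hmem _ ih => rw [Trm.subst_app]; exact .arg (List.mem_map_of_mem hmem) ih

theorem Trm.OnlyFuncs.of_subst {F : Type} {Fp : Set F} {t : Trm F} {σ : Subst F}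
    (h : (t.subst σ).OnlyFuncs Fp) : t.OnlyFuncs Fp :=
  fun f hf => h f (hf.subst σ)

theorem Trm.OnlyFuncs.of_mem_app {F : Type} {Fp : Set F} {f : F} {ts : List (Trm F)}
    {t : Trm F} (h : (Trm.app f ts).OnlyFuncs Fp) (ht : t ∈ ts) : t.OnlyFuncs Fp :=
  fun g hg => h g (.arg ht hg)

open Classical in
/-- Any program term would do in place of `var 0`. -/
noncomputable def Trm.prune {F : Type} (Fp : Set F) : Trm F → Trm F
  | .var v => .var v
  | .app f ts => if f ∈ Fp then .app f (ts.attach.map fun t => Trm.prune Fp t.1) else .var 0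
  decreasing_by
    have := List.sizeOf_lt_of_mem t.2
    simp only [Trm.app.sizeOf_spec] at *
    omega

open Classical in
theorem Trm.prune_app {F : Type} (Fp : Set F) (f : F) (ts : List (Trm F)) :
    (Trm.app f ts).prune Fp = if f ∈ Fp then .app f (ts.map (Trm.prune Fp)) else .var 0 := by
  rw [Trm.prune, List.attach_map_val]

theorem Trm.onlyFuncs_prune {F : Type} (Fp : Set F) (t : Trm F) : (t.prune Fp).OnlyFuncs Fp := by
  induction t using Trm.induction_mem with
  | var v =>
    intro f hf
    rw [Trm.prune] at hf
    cases hf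
  | app g ts ih =>
    intro f hf
    rw [Trm.prune_app] at hf
    split_ifs at hf with hg
    · cases hf with
      | head => exact hg
      | arg hmem hfun =>
        obtain ⟨u, hu, rfl⟩ := List.mem_map.mp hmem
        exact ih u hu f hfun
    · cases hf

theorem Trm.subst_prune_of_onlyFuncs {F : Type} {Fp : Set F} (θ : Subst F) {s : Trm F}
    (hs : s.OnlyFuncs Fp) : s.subst (fun v => (θ v).prune Fp) = (s.subst θ).prune Fp := by
  induction s using Trm.induction_mem with
  | var v => simp
  | app f ts ih =>
    rw [Trm.subst_app, Trm.subst_app, Trm.prune_app, if_pos (hs f .head), List.map_map]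
    exact congrArg _ (List.map_congr_left fun t ht => ih t ht (hs.of_mem_app ht))

/-- an mgu of two program terms binds variables only to program terms. -/
theorem mgu_binds_only_program_terms {F : Type} (Fp : Set F) (s t : Trm F)
    (hs : s.OnlyFuncs Fp) (ht : t.OnlyFuncs Fp) (theta : Subst F)
    (hunif : s.subst theta = t.subst theta)
    (hmgu : forall eta : Subst F, s.subst eta = t.subst eta ->
      exists sigma : Subst F, eta = theta.comp sigma) :
    forall v, (theta v).OnlyFuncs Fp := by
  have hpruned :
      s.subst (fun v => (theta v).prune Fp) = t.subst (fun v => (theta v).prune Fp) := by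
    rw [Trm.subst_prune_of_onlyFuncs theta hs, Trm.subst_prune_of_onlyFuncs theta ht, hunif]
  obtain ⟨σ, hσ⟩ := hmgu _ hpruned
  intro v
  have hfactor : (theta v).subst σ = (theta v).prune Fp := (congrFun hσ v).symm
  exact Trm.OnlyFuncs.of_subst (hfactor ▸ Trm.onlyFuncs_prune Fp (theta v))

end Flounder
end

section
/- Groundness dependencies are sound under the Pos-style abstraction: if in a definite program every unification X = f(Y₁,...,Y_N) with f a program function symbol is abstracted by the Boolean constraint X ↔ (Y₁ ∧ ... ∧ Y_N), and every call evar(X) or enonground(X) by X ↔ False, then any Boolean model of the abstracted program is a safe approximation of groundness: whenever the model forces an argument's Boolean variable to True in an atom of the (concrete) success set, the corresponding argument term contains only program function symbols. -/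
set_option autoImplicit false

namespace Flounder

/-- The Boolean abstraction of a term under a valuation of the variables:
`X = f(Y₁,...,Y_N)` with `f` a program function symbol is abstracted by
`X ↔ Y₁ ∧ ... ∧ Y_N`, so a program term's value is the conjunction of the values
of its variables. -/
def absTrm {F : Type} (v : ℕ → Prop) (t : Trm F) : Prop := ∀ x, t.HasVar x → v x

/-- Abstract truth of an atom: original predicates are interpreted by the Boolean
model `M`; calls `evar(X)`/`enonground(X)` are abstracted by `X ↔ False`. -/
def AbsHolds {P F : Type} (M : P → List Prop → Prop) (v : ℕ → Prop)
    (A : Atom (SPred P) F) : Prop :=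
  match A.pred with
  | SPred.orig q => M q (A.args.map (absTrm v))
  | SPred.evar => ∀ t ∈ A.args, ¬ absTrm v t
  | SPred.enonground => ∀ t ∈ A.args, ¬ absTrm v t

/-- `M` is a Boolean model of the abstracted program. -/
def IsAbsModel {P F : Type} (M : P → List Prop → Prop)
    (cls : Set (Clause (SPred P) F)) : Prop :=
  ∀ c ∈ cls, ∀ v : ℕ → Prop, (∀ B ∈ c.body, AbsHolds M v B) → AbsHolds M v c.head


/-!
Read the Boolean model `M` as a concrete interpretation: `q(t₁, …, tₙ)` holds iff `M q` accepts
the truth values "`tᵢ` contains only program function symbols", and `evar(t)`, `enonground(t)`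
hold iff `t` contains an extraneous symbol. A program clause contains only program symbols, so
instantiating it by `γ` gives each of its terms exactly the value that the Boolean abstraction
assigns it under the valuation `x ↦ (γ x).OnlyFuncs Fp`. Hence the model property of `M` makes
the interpretation closed under all instances of the program clauses, and the fact sets hold in
it trivially. SLD resolution is sound for every set of atoms closed under clause instances, so
the success set lies inside the interpretation.
-/

namespace Trm

variable {F : Type}

theorem ind {motive : Trm F → Prop}
    (var : ∀ v, motive (.var v))
    (app : ∀ f ts, (∀ t ∈ ts, motive t) → motive (.app f ts)) :
    ∀ t, motive t
  | .var v => var v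
  | .app f ts => app f ts (fun t _ => ind var app t)
  decreasing_by
    have := List.sizeOf_lt_of_mem ‹t ∈ ts›
    simp only [Trm.app.sizeOf_spec] at *
    omega

@[simp] theorem subst_var_s19 (θ : Subst F) (v : ℕ) : (Trm.var v).subst θ = θ v := by
  rw [Trm.subst]

@[simp] theorem subst_app_s19 (θ : Subst F) (f : F) (ts : List (Trm F)) :
    (Trm.app f ts).subst θ = .app f (ts.map (Trm.subst θ)) := by
  rw [Trm.subst]
  simp

theorem hasVar_var_iff {x v : ℕ} : (Trm.var v : Trm F).HasVar x ↔ x = v :=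
  ⟨fun | .var => rfl, fun h => h ▸ .var⟩

theorem hasVar_app_iff {x : ℕ} {f : F} {ts : List (Trm F)} :
    (Trm.app f ts).HasVar x ↔ ∃ t ∈ ts, t.HasVar x :=
  ⟨fun | .app ht h => ⟨_, ht, h⟩, fun ⟨_, ht, h⟩ => .app ht h⟩

theorem hasFunc_var {g : F} {v : ℕ} : ¬ (Trm.var v).HasFunc g := nofun

theorem hasFunc_app_iff {g f : F} {ts : List (Trm F)} :
    (Trm.app f ts).HasFunc g ↔ g = f ∨ ∃ t ∈ ts, t.HasFunc g :=
  ⟨fun | .head => .inl rfl | .arg ht h => .inr ⟨_, ht, h⟩,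
   fun | .inl h => h ▸ .head | .inr ⟨_, ht, h⟩ => .arg ht h⟩

theorem hasFunc_subst {θ : Subst F} {g : F} (t : Trm F) :
    (t.subst θ).HasFunc g ↔ t.HasFunc g ∨ ∃ v, t.HasVar v ∧ (θ v).HasFunc g := by
  induction t using Trm.ind with
  | var v => simp [hasFunc_var, hasVar_var_iff]
  | app f ts ih =>
    simp only [subst_app_s19, hasFunc_app_iff, List.mem_map, hasVar_app_iff]
    constructor
    · rintro (rfl | ⟨_, ⟨t, ht, rfl⟩, h⟩)
      · exact .inl (.inl rfl)
      · rcases (ih t ht).1 h with h | ⟨v, hv, h⟩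
        · exact .inl (.inr ⟨t, ht, h⟩)
        · exact .inr ⟨v, ⟨t, ht, hv⟩, h⟩
    · rintro ((rfl | ⟨t, ht, h⟩) | ⟨v, ⟨t, ht, hv⟩, h⟩)
      · exact .inl rfl
      · exact .inr ⟨_, ⟨t, ht, rfl⟩, (ih t ht).2 (.inl h)⟩
      · exact .inr ⟨_, ⟨t, ht, rfl⟩, (ih t ht).2 (.inr ⟨v, hv, h⟩)⟩

theorem subst_subst (θ σ : Subst F) (t : Trm F) :
    (t.subst θ).subst σ = t.subst (θ.comp σ) := by
  induction t using Trm.ind with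
  | var v => simp [Subst.comp]
  | app f ts ih => simpa using List.map_congr_left ih

theorem subst_eq_self {θ : Subst F} {t : Trm F} (h : ∀ v, t.HasVar v → θ v = .var v) :
    t.subst θ = t := by
  induction t using Trm.ind with
  | var v => simpa using h v .var
  | app f ts ih =>
    simpa using List.map_congr_left fun t ht => ih t ht fun v hv => h v (.app ht hv)

theorem subst_of_ground {θ : Subst F} {t : Trm F} (h : t.Ground) : t.subst θ = t :=
  subst_eq_self fun v hv => absurd hv (h v)

theorem onlyFuncs_subst_iff {Fp : Set F} {γ : Subst F} {t : Trm F} (ht : t.OnlyFuncs Fp) :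
    (t.subst γ).OnlyFuncs Fp ↔ absTrm (fun x => (γ x).OnlyFuncs Fp) t := by
  simp only [OnlyFuncs, absTrm, hasFunc_subst]
  exact ⟨fun h x hx f hf => h f (.inr ⟨x, hx, hf⟩),
    fun h f => Or.rec (ht f) fun ⟨x, hx, hf⟩ => h x hx f hf⟩

end Trm

theorem ENongroundT.not_onlyFuncs {F : Type} {Fp : Set F} {t : Trm F}
    (h : ENongroundT Fp t) : ¬ t.OnlyFuncs Fp :=
  fun ht => h.elim fun f hf => hf.2 (ht f hf.1)

theorem EVarT.not_onlyFuncs {F : Type} {Fp : Set F} :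
    ∀ {t : Trm F}, EVarT Fp t → ¬ t.OnlyFuncs Fp
  | .app _ _, h => ENongroundT.not_onlyFuncs ⟨_, .head, h⟩

theorem Subst.comp_assoc {F : Type} (θ σ τ : Subst F) :
    (θ.comp σ).comp τ = θ.comp (σ.comp τ) :=
  funext fun v => Trm.subst_subst σ τ (θ v)

theorem Subst.comp_var {F : Type} (θ : Subst F) : θ.comp Trm.var = θ :=
  funext fun _ => Trm.subst_eq_self fun _ _ => rfl

section Atoms

variable {P F : Type}

theorem Atom.subst_subst (θ σ : Subst F) (A : Atom P F) :
    (A.subst θ).subst σ = A.subst (θ.comp σ) := by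
  simpa [Atom.subst] using List.map_congr_left fun t _ => Trm.subst_subst θ σ t

theorem Atom.subst_eq_self {θ : Subst F} {A : Atom P F}
    (h : ∀ v, A.HasVar v → θ v = .var v) : A.subst θ = A := by
  cases A
  simpa [Atom.subst] using
    List.map_congr_left fun t ht => Trm.subst_eq_self fun v hv => h v ⟨t, ht, hv⟩

theorem Clause.subst_subst (θ σ : Subst F) (c : Clause P F) :
    (c.subst θ).subst σ = c.subst (θ.comp σ) := by
  simpa [Clause.subst] using
    ⟨Atom.subst_subst θ σ c.head, fun B _ => Atom.subst_subst θ σ B⟩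

theorem exists_mem_annBody {c c₀ : Clause P F} {ann : Ann P F} {B : Atom P F}
    (hB : B ∈ c.body) : ∃ ann', (B, ann') ∈ annBody c c₀ ann := by
  obtain ⟨j, hj, rfl⟩ := List.getElem_of_mem hB
  exact ⟨_, List.mem_map.2 ⟨(j, c.body[j]), List.mem_map.2
    ⟨(c.body[j], j), List.mem_zipIdx_iff_getElem?.2 (by simp [hj]), rfl⟩, rfl⟩⟩

end Atoms

def IsInstanceModel {P F : Type} (prog : Set (Clause P F)) (I : Set (Atom P F)) : Prop :=
  ∀ c ∈ prog, ∀ γ : Subst F, (∀ B ∈ (c.subst γ).body, B ∈ I) → (c.subst γ).head ∈ I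

theorem IsInstanceModel.union {P F : Type} {prog prog' : Set (Clause P F)}
    {I : Set (Atom P F)} (h : IsInstanceModel prog I) (h' : IsInstanceModel prog' I) :
    IsInstanceModel (prog ∪ prog') I
  | c, .inl hc => h c hc
  | c, .inr hc => h' c hc

namespace Derivation

variable {P F : Type} {prog : Set (Clause P F)} {C : Set (Atom P F)} {g0 : AGoal P F} {n : ℕ}

theorem exists_sub_eq_comp (D : Derivation P F prog C g0 n) {i m : ℕ} (him : i ≤ m)
    (hmn : m ≤ n) : ∃ τ, D.sub m = (D.sub i).comp τ := by
  induction m, him using Nat.le_induction with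
  | base => exact ⟨Trm.var, (Subst.comp_var _).symm⟩
  | succ m _ ih =>
    obtain ⟨τ, hτ⟩ := ih (by omega)
    exact ⟨τ.comp (D.mgu m), by rw [D.hsubs m (by omega), hτ, Subst.comp_assoc]⟩

/-- The selected atom's answer instance is the head of an instance of a program clause whose
body atoms are the new atoms of the next goal; `D.sub i` fixes the clause variant, which is
renamed apart, so the two instances agree. -/
theorem answer_mem_of_succ (D : Derivation P F prog C g0 n) {I : Set (Atom P F)}
    (hI : IsInstanceModel prog I) {i : ℕ} (hi : i < n)
    (hnext : ∀ a ∈ D.raw (i + 1), a.1.subst (D.sub n) ∈ I) :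
    ∀ a ∈ D.raw i, a.1.subst (D.sub n) ∈ I := by
  obtain ⟨τ, hτ⟩ := D.exists_sub_eq_comp (Nat.succ_le_of_lt hi) le_rfl
  obtain ⟨pre, post, hraw, -, ⟨hunif, -⟩, hraw'⟩ := D.hstep i hi
  obtain ⟨ρ, -, hcl⟩ := D.hvariant i hi
  have hsub : D.sub n = (D.sub i).comp ((D.mgu i).comp τ) := by
    rw [hτ, D.hsubs i hi, Subst.comp_assoc]
  have hsel : (D.selAtom i).subst (D.sub n) = (D.cl i).head.subst ((D.mgu i).comp τ) := by
    rw [hsub, ← Atom.subst_subst, ← Atom.subst_subst, hunif, Atom.subst_subst]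
  have hbody : ∀ B ∈ (D.cl i).body, B.subst ((D.mgu i).comp τ) ∈ I := by
    intro B hB
    have hfresh : B.subst (D.sub i) = B :=
      Atom.subst_eq_self fun v hv => (D.hfresh i hi v (.inr ⟨B, hB, hv⟩)).2.1
    obtain ⟨ann, hmem⟩ := exists_mem_annBody (c₀ := D.orig i) (ann := D.selAnn i) hB
    simpa [hsub, ← Atom.subst_subst, hfresh] using
      hnext (B, ann) (by rw [hraw']; simp [hmem])
  have hhead : (D.selAtom i).subst (D.sub n) ∈ I := by
    have := hI _ (D.horig i hi) (ρ.comp ((D.mgu i).comp τ))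
    rw [← Clause.subst_subst, ← hcl] at this
    exact hsel ▸ this (by simpa [Clause.subst] using hbody)
  intro a ha
  rw [hraw, List.mem_append, List.mem_cons] at ha
  rcases ha with ha | rfl | ha
  · exact hnext a (by rw [hraw']; simp [ha])
  · exact hhead
  · exact hnext a (by rw [hraw']; simp [ha])

theorem answer_mem (D : Derivation P F prog C g0 n) (hD : D.Successful)
    {I : Set (Atom P F)} (hI : IsInstanceModel prog I) {i : ℕ} (hi : i ≤ n) :
    ∀ a ∈ D.raw i, a.1.subst (D.sub n) ∈ I := by
  induction hi using Nat.decreasingInduction with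
  | self => simp [show D.raw n = [] from hD]
  | of_succ i hin ih => exact D.answer_mem_of_succ hI hin ih

end Derivation

theorem SS_subset_of_isInstanceModel {P F : Type} {prog : Set (Clause P F)} {I : Set (Atom P F)}
    (hI : IsInstanceModel prog I) : SS prog ⊆ I := by
  rintro A ⟨hA, n, D, hD⟩
  have := D.answer_mem hD hI (Nat.zero_le n) (A, [(none, 1)]) (by simp [D.hraw0, initGoal])
  rwa [Atom.subst_eq_self fun v hv => absurd hv (hA v)] at this

section Groundness

variable {P F : Type}

def groundnessInterp (Fp : Set F) (M : P → List Prop → Prop) : Set (Atom (SPred P) F) :=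
  { A | match A.pred with
        | SPred.orig q => M q (A.args.map (Trm.OnlyFuncs Fp))
        | _ => ∀ t ∈ A.args, ¬ t.OnlyFuncs Fp }

theorem subst_mem_groundnessInterp_iff {Fp : Set F} {M : P → List Prop → Prop}
    {γ : Subst F} {A : Atom (SPred P) F} (hA : A.OnlyFuncs Fp) :
    A.subst γ ∈ groundnessInterp Fp M ↔ AbsHolds M (fun x => (γ x).OnlyFuncs Fp) A := by
  obtain ⟨p, args⟩ := A
  have hargs : ∀ t ∈ args, (t.subst γ).OnlyFuncs Fp ↔ absTrm (fun x => (γ x).OnlyFuncs Fp) t :=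
    fun t ht => Trm.onlyFuncs_subst_iff (hA t ht)
  cases p <;> simp only [groundnessInterp, AbsHolds, Atom.subst, Set.mem_ofPred_eq,
    List.map_map, List.forall_mem_map, Function.comp_def]
  case orig q => rw [List.map_congr_left fun t ht => propext (hargs t ht)]
  all_goals exact forall₂_congr fun t ht => not_congr (hargs t ht)

theorem isInstanceModel_groundnessInterp {Fp : Set F} {cls : Set (Clause (SPred P) F)}
    (hcls : ∀ c ∈ cls, c.OnlyFuncs Fp) {M : P → List Prop → Prop} (hM : IsAbsModel M cls) :
    IsInstanceModel cls (groundnessInterp Fp M) := by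
  intro c hc γ hbody
  rw [Clause.subst, subst_mem_groundnessInterp_iff (hcls c hc).1]
  refine hM c hc _ fun B hB => ?_
  rw [← subst_mem_groundnessInterp_iff ((hcls c hc).2 B hB)]
  exact hbody _ (List.mem_map_of_mem hB)

theorem isInstanceModel_evarFacts_groundnessInterp {Fp : Set F} {M : P → List Prop → Prop} :
    IsInstanceModel (evarFacts P Fp) (groundnessInterp Fp M) := by
  rintro _ ⟨t, ht, hev, rfl⟩ γ -
  simpa [groundnessInterp, Clause.subst, Atom.subst, Trm.subst_of_ground ht] using
    hev.not_onlyFuncs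

theorem isInstanceModel_engFacts_groundnessInterp {Fp : Set F} {M : P → List Prop → Prop} :
    IsInstanceModel (engFacts P Fp) (groundnessInterp Fp M) := by
  rintro _ ⟨t, ht, heng, rfl⟩ γ -
  simpa [groundnessInterp, Clause.subst, Atom.subst, Trm.subst_of_ground ht] using
    heng.not_onlyFuncs

end Groundness

/-- soundness of the Pos-style groundness abstraction: if the Boolean
model forces an argument position to True, then in every atom of the concrete success
set (with evar/enonground given by their fact sets) the corresponding argument
contains only program function symbols. -/
theorem pos_abstraction_sound {P F : Type} (Fp : Set F)
    (cls : Set (Clause (SPred P) F))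
    (hcls : ∀ c ∈ cls, c.OnlyFuncs Fp ∧ ∃ q : P, c.head.pred = SPred.orig q)
    (M : P → List Prop → Prop) (hM : IsAbsModel M cls) :
    ∀ A ∈ SS (cls ∪ evarFacts P Fp ∪ engFacts P Fp), ∀ q : P,
      A.pred = SPred.orig q ->
      ∀ i (h : i < A.args.length),
        (∀ bs : List Prop, ∀ hb : bs.length = A.args.length, M q bs ->
           bs.get ⟨i, by omega⟩) ->
        (A.args.get ⟨i, h⟩).OnlyFuncs Fp := by
  rintro ⟨p, args⟩ hA q rfl i h hforce
  have hmodel : IsInstanceModel (cls ∪ evarFacts P Fp ∪ engFacts P Fp) (groundnessInterp Fp M) :=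
    ((isInstanceModel_groundnessInterp (fun c hc => (hcls c hc).1) hM).union
      isInstanceModel_evarFacts_groundnessInterp).union
      isInstanceModel_engFacts_groundnessInterp
  simpa using hforce _ (List.length_map _) (SS_subset_of_isInstanceModel hmodel hA)

end Flounder
end
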